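/- arXiv:1907.01868 — 5 statements merged into one kernel-verified Lean document; each statement's English description precedes it below -/
import Mathlib

section
/- For any β ≥ 0, ω > 0, α > 0, and a function g(n) satisfying ((β+α+1)·ln n/(α·ω·n))^(1/α) < g(n) < ω^(-1/α) for all sufficiently large n, the integral ∫₀^{g(n)} t^β (1 - ω t^α)^n dt is asymptotically equal to (1/α) · ω^{-(β+1)/α} · Γ((β+1)/α) · n^{-(β+1)/α} as n → ∞, i.e., the ratio of the two sides tends to 1. -/
/-!
Substituting `u = ω t ^ α` turns the integral into `(α ω ^ s)⁻¹ ∫₀^{x n} u ^ (s - 1) (1 - u) ^ n du`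
with `s = (β + 1) / α` and `x n = ω (g n) ^ α`. Over `[0, 1]` this is the Beta integral
`B(s, n + 1)`, and `n ^ s B(s, n + 1)` is Euler's sequence `GammaSeq s n → Γ(s)`. The hypothesis
on `g` says `(s + 1) log n / n ≤ x n ≤ 1`, so the missing piece `∫_{x n}^1` is at most
`(1 - x n) ^ n / s ≤ exp (-n x n) / s ≤ n ^ (-(s + 1)) / s`, negligible against `n ^ (-s)`.
-/

open MeasureTheory Filter Real Set Topology

theorem integral_comp_mul_rpow {E : Type*} [NormedAddCommGroup E] [NormedSpace ℝ E]
    {α ω c : ℝ} (hα : 0 < α) (hω : 0 < ω) (hc : 0 ≤ c) (G : ℝ → E) :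
    ∫ u in (0:ℝ)..ω * c ^ α, G u = ∫ t in (0:ℝ)..c, (ω * (α * t ^ (α - 1))) • G (ω * t ^ α) := by
  set f : ℝ → ℝ := fun t => ω * t ^ α
  have hmono : StrictMonoOn f (Icc 0 c) := fun x hx y hy hxy =>
    mul_lt_mul_of_pos_left (rpow_lt_rpow hx.1 hxy hα) hω
  have himage : f '' Ioc 0 c = Ioc 0 (ω * c ^ α) := by
    have hcont : Continuous f := continuous_const.mul (continuous_rpow_const hα.le)
    rw [hcont.continuousOn.image_Ioc_of_strictMonoOn hc hmono]
    simp [f, zero_rpow hα.ne']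
  have hderiv : ∀ t ∈ Ioc 0 c, HasDerivWithinAt f (ω * (α * t ^ (α - 1))) (Ioc 0 c) t :=
    fun t ht => ((hasDerivAt_rpow_const (Or.inl ht.1.ne')).const_mul ω).hasDerivWithinAt
  rw [intervalIntegral.integral_of_le (by positivity), intervalIntegral.integral_of_le hc,
    ← himage, integral_image_eq_integral_abs_deriv_smul measurableSet_Ioc hderiv
      (hmono.injOn.mono Ioc_subset_Icc_self)]
  refine setIntegral_congr_fun measurableSet_Ioc fun t ht => ?_
  rw [abs_of_pos (by have := ht.1; positivity)]

theorem integral_rpow_mul_one_sub_mul_rpow_pow {α β ω c : ℝ} (hα : 0 < α) (hω : 0 < ω)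
    (hc : 0 ≤ c) (n : ℕ) :
    ∫ t in (0:ℝ)..c, t ^ β * (1 - ω * t ^ α) ^ n =
      (α * ω ^ ((β + 1) / α))⁻¹ *
        ∫ u in (0:ℝ)..ω * c ^ α, u ^ ((β + 1) / α - 1) * (1 - u) ^ n := by
  set s := (β + 1) / α
  have hαs : α * s = β + 1 := mul_div_cancel₀ _ hα.ne'
  rw [integral_comp_mul_rpow hα hω hc, ← intervalIntegral.integral_const_mul,
    intervalIntegral.integral_of_le hc, intervalIntegral.integral_of_le hc]
  refine setIntegral_congr_fun measurableSet_Ioc fun t ht => ?_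
  have ht : 0 < t := ht.1
  have hpow : ω * t ^ (α - 1) * (ω * t ^ α) ^ (s - 1) = ω ^ s * t ^ β := by
    rw [mul_rpow hω.le (rpow_nonneg ht.le _), ← rpow_mul ht.le, rpow_sub_one hω.ne',
      show β = (α - 1) + α * (s - 1) by linarith, rpow_add ht]
    field_simp
  simp only [smul_eq_mul]
  calc t ^ β * (1 - ω * t ^ α) ^ n
      = (α * ω ^ s)⁻¹ * (α * (ω ^ s * t ^ β)) * (1 - ω * t ^ α) ^ n := by
        field_simp
    _ = _ := by rw [← hpow]; ring

theorem GammaSeq_eq_rpow_mul_integral {s : ℝ} (hs : 0 < s) (n : ℕ) :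
    GammaSeq s n = (n : ℝ) ^ s * ∫ u in (0:ℝ)..1, u ^ (s - 1) * (1 - u) ^ n := by
  have hbeta : Complex.betaIntegral s (n + 1) =
      ((∫ u in (0:ℝ)..1, u ^ (s - 1) * (1 - u) ^ n : ℝ) : ℂ) := by
    rw [Complex.betaIntegral, ← intervalIntegral.integral_ofReal]
    refine intervalIntegral.integral_congr fun u hu => ?_
    rw [uIcc_of_le zero_le_one] at hu
    push_cast
    rw [Complex.ofReal_cpow hu.1, add_sub_cancel_right, Complex.cpow_natCast]
    push_cast
    ring_nf
  have hcomplex : (GammaSeq s n : ℂ) = Complex.GammaSeq s n := by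
    simp only [GammaSeq, Complex.GammaSeq]
    push_cast
    rw [Complex.ofReal_cpow n.cast_nonneg, Complex.ofReal_natCast]
  rw [Complex.GammaSeq_eq_betaIntegral_of_re_pos (by simpa using hs), hbeta,
    ← Complex.ofReal_natCast, ← Complex.ofReal_cpow n.cast_nonneg] at hcomplex
  exact_mod_cast hcomplex

theorem intervalIntegrable_rpow_sub_one_mul_one_sub_pow {s : ℝ} (hs : 0 < s) (n : ℕ)
    (a b : ℝ) : IntervalIntegrable (fun u => u ^ (s - 1) * (1 - u) ^ n) volume a b :=
  (intervalIntegral.intervalIntegrable_rpow' (by linarith)).mul_continuousOn (by fun_prop)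

theorem integral_rpow_sub_one_mul_one_sub_pow_le {s x : ℝ} (hs : 0 < s) (hx0 : 0 ≤ x)
    (hx1 : x ≤ 1) (n : ℕ) :
    ∫ u in x..1, u ^ (s - 1) * (1 - u) ^ n ≤ (1 - x) ^ n / s := by
  calc ∫ u in x..1, u ^ (s - 1) * (1 - u) ^ n
      ≤ ∫ u in x..1, u ^ (s - 1) * (1 - x) ^ n := by
        refine intervalIntegral.integral_mono_on hx1
          (intervalIntegrable_rpow_sub_one_mul_one_sub_pow hs n _ _)
          ((intervalIntegral.intervalIntegrable_rpow' (by linarith)).mul_const _) fun u hu => ?_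
        gcongr
        · exact rpow_nonneg (hx0.trans hu.1) _
        · linarith [hu.2]
        · exact hu.1
    _ = (1 - x ^ s) / s * (1 - x) ^ n := by
        rw [intervalIntegral.integral_mul_const, integral_rpow (Or.inl (by linarith)),
          sub_add_cancel, one_rpow]
    _ ≤ (1 - x) ^ n / s := by
        rw [div_mul_eq_mul_div]
        gcongr
        have : 0 ≤ (1 - x) ^ n := pow_nonneg (by linarith) n
        nlinarith [rpow_nonneg hx0 s]

theorem one_sub_pow_le_rpow_neg {s x : ℝ} {n : ℕ} (hn : 0 < n)
    (hx : (s + 1) * log n / n ≤ x) (hx1 : x ≤ 1) : (1 - x) ^ n ≤ (n : ℝ) ^ (-(s + 1)) := by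
  have hn' : (0 : ℝ) < n := Nat.cast_pos.mpr hn
  calc (1 - x) ^ n = (1 - n * x / n) ^ n := by rw [mul_div_cancel_left₀ _ hn'.ne']
    _ ≤ exp (-(n * x)) := one_sub_div_pow_le_exp_neg (by nlinarith)
    _ ≤ exp (-((s + 1) * log n)) := by
        rw [div_le_iff₀ hn'] at hx
        exact exp_le_exp.mpr (by linarith)
    _ = (n : ℝ) ^ (-(s + 1)) := by rw [rpow_def_of_pos hn']; ring_nf

theorem tendsto_rpow_mul_integral_tail {s : ℝ} (hs : 0 < s) {x : ℕ → ℝ}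
    (hx : ∀ᶠ n : ℕ in atTop, (s + 1) * log n / n ≤ x n ∧ x n ≤ 1) :
    Tendsto (fun n : ℕ => (n : ℝ) ^ s * ∫ u in x n..1, u ^ (s - 1) * (1 - u) ^ n)
      atTop (𝓝 0) := by
  have hbound : Tendsto (fun n : ℕ => (s * n)⁻¹) atTop (𝓝 0) :=
    tendsto_inv_atTop_zero.comp (tendsto_natCast_atTop_atTop.const_mul_atTop hs)
  refine tendsto_of_tendsto_of_tendsto_of_le_of_le' tendsto_const_nhds hbound ?_ ?_ <;>
    filter_upwards [hx, eventually_gt_atTop 0] with n ⟨hxlow, hx1⟩ hn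
  all_goals
    have hn' : (0 : ℝ) < n := Nat.cast_pos.mpr hn
    have hx0 : 0 ≤ x n := le_trans (by have := log_natCast_nonneg n; positivity) hxlow
  · refine mul_nonneg (rpow_nonneg hn'.le s) (intervalIntegral.integral_nonneg hx1 fun u hu => ?_)
    exact mul_nonneg (rpow_nonneg (hx0.trans hu.1) _) (pow_nonneg (by linarith [hu.2]) n)
  · calc (n : ℝ) ^ s * ∫ u in x n..1, u ^ (s - 1) * (1 - u) ^ n
        ≤ (n : ℝ) ^ s * ((n : ℝ) ^ (-(s + 1)) / s) := by
          gcongr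
          exact (integral_rpow_sub_one_mul_one_sub_pow_le hs hx0 hx1 n).trans
            (div_le_div_of_nonneg_right (one_sub_pow_le_rpow_neg hn hxlow hx1) hs.le)
      _ = (s * n)⁻¹ := by
          rw [mul_div_assoc', ← rpow_add hn', show s + -(s + 1) = -1 by ring, rpow_neg_one]
          field_simp

theorem tendsto_rpow_mul_integral_Gamma {s : ℝ} (hs : 0 < s) {x : ℕ → ℝ}
    (hx : ∀ᶠ n : ℕ in atTop, (s + 1) * log n / n ≤ x n ∧ x n ≤ 1) :
    Tendsto (fun n : ℕ => (n : ℝ) ^ s * ∫ u in (0:ℝ)..x n, u ^ (s - 1) * (1 - u) ^ n)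
      atTop (𝓝 (Gamma s)) := by
  have hfull := (GammaSeq_tendsto_Gamma s).congr fun n => GammaSeq_eq_rpow_mul_integral hs n
  simpa only [sub_zero] using (hfull.sub (tendsto_rpow_mul_integral_tail hs hx)).congr fun n => by
    rw [← mul_sub, ← intervalIntegral.integral_add_adjacent_intervals (b := x n)
      (intervalIntegrable_rpow_sub_one_mul_one_sub_pow hs n _ _)
      (intervalIntegrable_rpow_sub_one_mul_one_sub_pow hs n _ _), add_sub_cancel_right]

theorem mul_rpow_mem_Ioo_of_mem_Ioo {α ω A y : ℝ} (hα : 0 < α) (hω : 0 < ω) (hA : 0 ≤ A)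
    (hy : y ∈ Ioo ((A / ω) ^ (1 / α)) (ω ^ (-(1 / α)))) : ω * y ^ α ∈ Ioo A 1 := by
  obtain ⟨hlow, hup⟩ := hy
  have hy0 : 0 ≤ y := (rpow_nonneg (div_nonneg hA hω.le) _).trans hlow.le
  rw [one_div, rpow_inv_lt_iff_of_pos (div_nonneg hA hω.le) hy0 hα, div_lt_iff₀' hω] at hlow
  rw [one_div, rpow_neg hω.le, ← inv_rpow hω.le, lt_rpow_inv_iff_of_pos hy0 (by positivity) hα]
    at hup
  exact ⟨hlow, by simpa [hω.ne'] using mul_lt_mul_of_pos_left hup hω⟩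

theorem stmt0 (α β ω : ℝ) (hβ : 0 ≤ β) (hω : 0 < ω) (hα : 0 < α)
    (g : ℕ → ℝ)
    (hg : ∀ᶠ n : ℕ in atTop,
      ((β + α + 1) * Real.log n / (α * ω * n)) ^ (1/α) < g n ∧ g n < ω ^ (-(1/α))) :
    Tendsto (fun n : ℕ =>
      (∫ t in (0:ℝ)..(g n), t ^ β * (1 - ω * t ^ α) ^ n) /
      ((1/α) * ω ^ (-((β+1)/α)) * Real.Gamma ((β+1)/α) * (n:ℝ) ^ (-((β+1)/α))))
      atTop (nhds 1) := by
  set s := (β + 1) / α with hs_def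
  have hs : 0 < s := by positivity
  have hx : ∀ᶠ n : ℕ in atTop,
      0 ≤ g n ∧ (s + 1) * log n / n ≤ ω * g n ^ α ∧ ω * g n ^ α ≤ 1 := by
    filter_upwards [hg] with n ⟨hlow, hup⟩
    have hA : 0 ≤ (s + 1) * log n / n := by have := log_natCast_nonneg n; positivity
    have hrw : (β + α + 1) * log n / (α * ω * n) = (s + 1) * log n / n / ω := by
      rw [hs_def]; field_simp; ring
    rw [hrw] at hlow
    have hmem := mul_rpow_mem_Ioo_of_mem_Ioo hα hω hA ⟨hlow, hup⟩
    exact ⟨(rpow_nonneg (by positivity) _).trans hlow.le, hmem.1.le, hmem.2.le⟩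
  have hlim := (tendsto_rpow_mul_integral_Gamma hs (hx.mono fun n h => h.2)).div_const (Gamma s)
  rw [div_self (Gamma_pos_of_pos hs).ne'] at hlim
  refine hlim.congr' ?_
  filter_upwards [hx] with n ⟨hg0, _⟩
  rw [integral_rpow_mul_one_sub_mul_rpow_pow hα hω hg0, ← hs_def, rpow_neg hω.le,
    rpow_neg (Nat.cast_nonneg n)]
  field_simp
end

section
/- Let f : ℝ → ℝ be C² with f(0) = 0, f'(0) = 0, and f''(0) = κ > 0, and let g : ℝ → ℝ be C² with g(0) = 0, g'(0) = 0, and g''(0) = λ where 0 ≤ λ < κ. For small t > 0 let x₋(t) < 0 < x₊(t) be the solutions near 0 of f(x) = g(x) + t (i.e., the intersection points of the graph of f with the vertically translated graph of g). Then the area A(t) = ∫_{x₋(t)}^{x₊(t)} (g(x) + t − f(x)) dx satisfies lim_{t→0⁺} A(t) · t^{−3/2} = (4/3)·√(2/(κ − λ)). -/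
/-!
Put `h = f - g` and `μ = κ - λ = h''(0)`; the cap is the region under `t - h` between two roots
of `h = t`. Given `ε > 0`, near `0` we have `μ - ε ≤ h'' ≤ μ + ε`, so `h` is convex and lies
between the parabolas `(μ ∓ ε) x² / 2`. Hence the cap area lies between the areas of the parabolic
caps under `t - (μ ± ε) x² / 2`, which are `(4/3) √(2/(μ ± ε)) t^{3/2}`; let `ε → 0`.
-/

open MeasureTheory Filter Real Set Topology

theorem ContDiff.continuous_deriv_deriv {h : ℝ → ℝ} (hh : ContDiff ℝ 2 h) :
    Continuous (deriv (deriv h)) :=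
  (contDiff_succ_iff_deriv (n := 1).mp hh).2.2.continuous_deriv le_rfl

theorem convexOn_sub_of_deriv_deriv_le {u v : ℝ → ℝ} {S : Set ℝ} (hS : Convex ℝ S)
    (hu : ContDiff ℝ 2 u) (hv : ContDiff ℝ 2 v)
    (huv : ∀ x ∈ S, deriv (deriv u) x ≤ deriv (deriv v) x) : ConvexOn ℝ S (v - u) := by
  have hd : deriv (v - u) = deriv v - deriv u :=
    funext fun x => deriv_sub (hv.differentiable two_ne_zero x) (hu.differentiable two_ne_zero x)
  refine convexOn_of_deriv2_nonneg' hS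
    ((hv.differentiable two_ne_zero).sub (hu.differentiable two_ne_zero)).differentiableOn ?_
    fun x hx => ?_
  · rw [hd]
    exact (hv.differentiable_deriv_two.sub hu.differentiable_deriv_two).differentiableOn
  · rw [Function.iterate_succ_apply', Function.iterate_one, hd,
      deriv_sub (hv.differentiable_deriv_two x) (hu.differentiable_deriv_two x), sub_nonneg]
    exact huv x hx

theorem le_of_deriv_deriv_le {u v : ℝ → ℝ} {S : Set ℝ} {a x : ℝ} (hS : Convex ℝ S)
    (hu : ContDiff ℝ 2 u) (hv : ContDiff ℝ 2 v) (ha : a ∈ interior S) (hx : x ∈ S)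
    (h0 : u a = v a) (h1 : deriv u a = deriv v a)
    (huv : ∀ y ∈ S, deriv (deriv u) y ≤ deriv (deriv v) y) : u x ≤ v x := by
  have hd : DifferentiableAt ℝ (v - u) a :=
    (hv.differentiable two_ne_zero a).sub (hu.differentiable two_ne_zero a)
  have hmin := (convexOn_sub_of_deriv_deriv_le hS hu hv huv).isMinOn_of_rightDeriv_eq_zero ha
    (by rw [hd.derivWithin (uniqueDiffWithinAt_Ioi a), deriv_sub (hv.differentiable two_ne_zero a)
      (hu.differentiable two_ne_zero a), h1, sub_self])
  simpa [h0] using hmin hx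

theorem deriv_deriv_half_mul_sq (c x : ℝ) : deriv (deriv fun y : ℝ => c * y ^ 2 / 2) x = c := by
  have : deriv (fun y : ℝ => c * y ^ 2 / 2) = fun y => c * y := by
    ext y
    simp only [deriv_div_const, differentiableAt_const, differentiableAt_fun_id,
      DifferentiableAt.fun_pow, deriv_fun_mul, deriv_const', zero_mul, deriv_fun_pow,
      Nat.cast_ofNat, Nat.add_one_sub_one, pow_one, deriv_id'', mul_one, zero_add]
    ring
  simp [this]

theorem half_mul_sq_le_of_le_deriv_deriv {h : ℝ → ℝ} {S : Set ℝ} {c x : ℝ} (hS : Convex ℝ S)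
    (hh : ContDiff ℝ 2 h) (h0 : h 0 = 0) (h1 : deriv h 0 = 0) (hS0 : (0 : ℝ) ∈ interior S)
    (hx : x ∈ S) (hc : ∀ y ∈ S, c ≤ deriv (deriv h) y) : c * x ^ 2 / 2 ≤ h x :=
  le_of_deriv_deriv_le (u := fun y => c * y ^ 2 / 2) hS (by fun_prop) hh hS0 hx (by simp [h0])
    (by simp [h1]) fun y hy => (deriv_deriv_half_mul_sq c y).trans_le (hc y hy)

theorem le_half_mul_sq_of_deriv_deriv_le {h : ℝ → ℝ} {S : Set ℝ} {C x : ℝ} (hS : Convex ℝ S)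
    (hh : ContDiff ℝ 2 h) (h0 : h 0 = 0) (h1 : deriv h 0 = 0) (hS0 : (0 : ℝ) ∈ interior S)
    (hx : x ∈ S) (hC : ∀ y ∈ S, deriv (deriv h) y ≤ C) : h x ≤ C * x ^ 2 / 2 :=
  le_of_deriv_deriv_le (v := fun y => C * y ^ 2 / 2) hS hh (by fun_prop) hS0 hx (by simp [h0])
    (by simp [h1]) fun y hy => (hC y hy).trans_eq (deriv_deriv_half_mul_sq C y).symm

theorem integral_sub_half_mul_sq (t K s : ℝ) :
    ∫ x in (-s)..s, (t - K * x ^ 2 / 2) = 2 * t * s - K * s ^ 3 / 3 := by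
  simp only [sub_eq_add_neg, ← neg_div, ← neg_mul]
  rw [intervalIntegral.integral_add intervalIntegrable_const
    (Continuous.intervalIntegrable (by fun_prop) _ _),
    intervalIntegral.integral_div, intervalIntegral.integral_const_mul, integral_pow]
  simp only [intervalIntegral.integral_const, sub_neg_eq_add, smul_eq_mul, neg_mul]
  ring

theorem integral_sub_half_mul_sq_sqrt {t K : ℝ} (ht : 0 ≤ t) (hK : 0 < K) :
    ∫ x in (-√(2 * t / K))..√(2 * t / K), (t - K * x ^ 2 / 2) = 4 / 3 * √(2 / K) * (t * √t) := by
  have hroot : K * √(2 * t / K) ^ 2 = 2 * t := by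
    rw [sq_sqrt (by positivity)]; field_simp
  have hsplit : √(2 * t / K) = √(2 / K) * √t := by
    rw [← sqrt_mul (by positivity)]; ring_nf
  rw [integral_sub_half_mul_sq]
  linear_combination (-√(2 * t / K) / 3) * hroot + (4 / 3 * t) * hsplit

theorem integral_sub_le_of_half_mul_sq_le {h : ℝ → ℝ} {c t u v : ℝ} (hc : 0 < c)
    (hh : Continuous h) (huv : u ≤ v) (hu : h u = t) (hv : h v = t)
    (hlow : ∀ x ∈ Icc u v, c * x ^ 2 / 2 ≤ h x) :
    ∫ x in u..v, (t - h x) ≤ 4 / 3 * √(2 / c) * (t * √t) := by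
  have hsq : ∀ x ∈ Icc u v, h x = t → x ^ 2 ≤ 2 * t / c := fun x hx hxt => by
    rw [le_div_iff₀ hc]; linarith [hlow x hx]
  have hu' := abs_le.mp (abs_le_sqrt (hsq u ⟨le_rfl, huv⟩ hu))
  have hv' := abs_le.mp (abs_le_sqrt (hsq v ⟨huv, le_rfl⟩ hv))
  have ht : 0 ≤ t := hu ▸ (by positivity : 0 ≤ c * u ^ 2 / 2).trans (hlow u ⟨le_rfl, huv⟩)
  set s := √(2 * t / c)
  calc ∫ x in u..v, (t - h x) ≤ ∫ x in u..v, (t - c * x ^ 2 / 2) :=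
        intervalIntegral.integral_mono_on huv (Continuous.intervalIntegrable (by fun_prop) _ _)
          (Continuous.intervalIntegrable (by fun_prop) _ _)
          fun x hx => by linarith [hlow x hx]
    _ ≤ ∫ x in (-s)..s, (t - c * x ^ 2 / 2) := by
        refine intervalIntegral.integral_mono_interval hu'.1 huv hv'.2
          ((ae_restrict_mem measurableSet_Ioc).mono fun x hx => ?_)
          (Continuous.intervalIntegrable (by fun_prop) _ _)
        have : x ^ 2 ≤ 2 * t / c := by
          simpa [s, sq_sqrt (by positivity : 0 ≤ 2 * t / c)] using
            sq_le_sq' hx.1.le hx.2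
        rw [le_div_iff₀ hc] at this
        simp only [Pi.zero_apply]; linarith
    _ = 4 / 3 * √(2 / c) * (t * √t) := integral_sub_half_mul_sq_sqrt ht hc

theorem le_integral_sub_of_le_half_mul_sq {h : ℝ → ℝ} {C t u v : ℝ} (hC : 0 < C) (ht : 0 ≤ t)
    (hh : Continuous h) (hu0 : u ≤ 0) (hv0 : 0 ≤ v) (hu : h u = t) (hv : h v = t)
    (hconv : ConvexOn ℝ (Icc u v) h) (hup : ∀ x ∈ Icc u v, h x ≤ C * x ^ 2 / 2) :
    4 / 3 * √(2 / C) * (t * √t) ≤ ∫ x in u..v, (t - h x) := by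
  have huv : u ≤ v := hu0.trans hv0
  have hsq : ∀ x ∈ Icc u v, h x = t → 2 * t / C ≤ x ^ 2 := fun x hx hxt => by
    rw [div_le_iff₀ hC]; linarith [hup x hx]
  set s := √(2 * t / C)
  have hsv : s ≤ v := sqrt_le_iff.mpr ⟨hv0, hsq v ⟨huv, le_rfl⟩ hv⟩
  have hsu : s ≤ -u := sqrt_le_iff.mpr ⟨neg_nonneg.mpr hu0, by simpa using hsq u ⟨le_rfl, huv⟩ hu⟩
  have hs : 0 ≤ s := sqrt_nonneg _
  have hcap : ∀ x ∈ Icc u v, h x ≤ t := fun x hx => by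
    simpa [hu, hv] using hconv.le_on_segment (left_mem_Icc.mpr huv) (right_mem_Icc.mpr huv)
      (by rwa [segment_eq_Icc huv])
  calc 4 / 3 * √(2 / C) * (t * √t) = ∫ x in (-s)..s, (t - C * x ^ 2 / 2) :=
        (integral_sub_half_mul_sq_sqrt ht hC).symm
    _ ≤ ∫ x in (-s)..s, (t - h x) :=
        intervalIntegral.integral_mono_on (by linarith)
          (Continuous.intervalIntegrable (by fun_prop) _ _)
          (Continuous.intervalIntegrable (by fun_prop) _ _)
          fun x hx => by linarith [hup x ⟨by linarith [hx.1], by linarith [hx.2]⟩]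
    _ ≤ ∫ x in u..v, (t - h x) :=
        intervalIntegral.integral_mono_interval (by linarith) (by linarith) hsv
          ((ae_restrict_mem measurableSet_Ioc).mono fun x hx => by
            simpa using hcap x (Ioc_subset_Icc_self hx))
          (Continuous.intervalIntegrable (by fun_prop) _ _)

theorem eventually_integral_sub_div_mem_Icc {h xm xp : ℝ → ℝ} {ε : ℝ} (hh : ContDiff ℝ 2 h)
    (h0 : h 0 = 0) (h1 : deriv h 0 = 0) (hε : 0 < ε) (hεμ : ε < deriv (deriv h) 0)
    (hx : ∀ᶠ t in 𝓝[>] 0, xm t < 0 ∧ 0 < xp t ∧ h (xm t) = t ∧ h (xp t) = t)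
    (hxm : Tendsto xm (𝓝[>] 0) (𝓝 0)) (hxp : Tendsto xp (𝓝[>] 0) (𝓝 0)) :
    ∀ᶠ t in 𝓝[>] 0, (∫ x in (xm t)..(xp t), (t - h x)) / (t * √t) ∈
      Icc (4 / 3 * √(2 / (deriv (deriv h) 0 + ε))) (4 / 3 * √(2 / (deriv (deriv h) 0 - ε))) := by
  set μ := deriv (deriv h) 0
  obtain ⟨δ, hδ, hball⟩ := Metric.mem_nhds_iff.mp <| hh.continuous_deriv_deriv.continuousAt
    (x := 0) |>.preimage_mem_nhds (Ioo_mem_nhds (by linarith : μ - ε < μ) (by linarith : μ < μ + ε))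
  rw [Real.ball_zero_eq_Ioo] at hball
  have hS0 : (0 : ℝ) ∈ interior (Ioo (-δ) δ) := by simp [hδ]
  have hlow : ∀ x ∈ Ioo (-δ) δ, (μ - ε) * x ^ 2 / 2 ≤ h x := fun x hx =>
    half_mul_sq_le_of_le_deriv_deriv (convex_Ioo _ _) hh h0 h1 hS0 hx fun y hy => (hball hy).1.le
  have hup : ∀ x ∈ Ioo (-δ) δ, h x ≤ (μ + ε) * x ^ 2 / 2 := fun x hx =>
    le_half_mul_sq_of_deriv_deriv_le (convex_Ioo _ _) hh h0 h1 hS0 hx fun y hy => (hball hy).2.le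
  have hconv : ConvexOn ℝ (Ioo (-δ) δ) h := by
    simpa using convexOn_sub_of_deriv_deriv_le (u := 0) (convex_Ioo _ _) contDiff_const hh
      fun y hy => by simpa using (by linarith [(hball hy).1] : 0 ≤ deriv (deriv h) y)
  filter_upwards [hx, hxm.eventually (Ioo_mem_nhds (neg_neg_iff_pos.mpr hδ) hδ),
    hxp.eventually (Ioo_mem_nhds (neg_neg_iff_pos.mpr hδ) hδ), self_mem_nhdsWithin]
    with t ⟨hm, hp, hhm, hhp⟩ hmδ hpδ (ht : 0 < t)
  have hsub : Icc (xm t) (xp t) ⊆ Ioo (-δ) δ := Icc_subset_Ioo hmδ.1 hpδ.2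
  rw [mem_Icc, le_div_iff₀ (by positivity), div_le_iff₀ (by positivity)]
  exact ⟨le_integral_sub_of_le_half_mul_sq (by linarith) ht.le hh.continuous hm.le hp.le hhm hhp
      (hconv.subset hsub (convex_Icc _ _)) fun x hx => hup x (hsub hx),
    integral_sub_le_of_half_mul_sq_le (by linarith) hh.continuous (hm.trans hp).le hhm hhp
      fun x hx => hlow x (hsub hx)⟩

theorem tendsto_of_forall_eventually_mem_Icc {α β : Type*} {l : Filter α} {l' : Filter β}
    [l'.NeBot] {F : α → ℝ} {lo hi : β → ℝ} {L : ℝ} (hlo : Tendsto lo l' (𝓝 L))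
    (hhi : Tendsto hi l' (𝓝 L)) (hF : ∀ᶠ ε in l', ∀ᶠ x in l, F x ∈ Icc (lo ε) (hi ε)) :
    Tendsto F l (𝓝 L) := by
  refine tendsto_order.mpr ⟨fun a ha => ?_, fun a ha => ?_⟩
  · obtain ⟨ε, hε, hεF⟩ := ((hlo.eventually (lt_mem_nhds ha)).and hF).exists
    exact hεF.mono fun x hx => hε.trans_le hx.1
  · obtain ⟨ε, hε, hεF⟩ := ((hhi.eventually (gt_mem_nhds ha)).and hF).exists
    exact hεF.mono fun x hx => hx.2.trans_lt hε

theorem rpow_neg_three_halves {t : ℝ} (ht : 0 < t) : t ^ (-(3 / 2) : ℝ) = (t * √t)⁻¹ := by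
  rw [rpow_neg ht.le, show (3 / 2 : ℝ) = 1 + 1 / 2 by norm_num, rpow_add ht, rpow_one,
    sqrt_eq_rpow]

theorem stmt5_general (f g : ℝ → ℝ) (κ lam : ℝ)
    (hf : ContDiff ℝ 2 f) (hf0 : f 0 = 0) (hf1 : deriv f 0 = 0) (hf2 : deriv (deriv f) 0 = κ)
    (hg : ContDiff ℝ 2 g) (hg0 : g 0 = 0) (hg1 : deriv g 0 = 0) (hg2 : deriv (deriv g) 0 = lam)
    (hlamκ : lam < κ)
    (xm xp : ℝ → ℝ)
    (hx : ∀ᶠ t in nhdsWithin 0 (Set.Ioi 0), xm t < 0 ∧ 0 < xp t ∧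
      f (xm t) = g (xm t) + t ∧ f (xp t) = g (xp t) + t)
    (hxm : Tendsto xm (nhdsWithin 0 (Set.Ioi 0)) (nhds 0))
    (hxp : Tendsto xp (nhdsWithin 0 (Set.Ioi 0)) (nhds 0)) :
    Tendsto (fun t => (∫ x in (xm t)..(xp t), (g x + t - f x)) * t ^ (-(3/2) : ℝ))
      (nhdsWithin 0 (Set.Ioi 0)) (nhds ((4/3) * Real.sqrt (2/(κ - lam)))) := by
  set h := f - g with h_def
  have hd : deriv h = deriv f - deriv g :=
    funext fun x => deriv_sub (hf.differentiable two_ne_zero x) (hg.differentiable two_ne_zero x)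
  have hμ : deriv (deriv h) 0 = κ - lam := by
    rw [hd, deriv_sub (hf.differentiable_deriv_two 0) (hg.differentiable_deriv_two 0), hf2, hg2]
  have hbounds : ∀ ε ∈ Ioo 0 (κ - lam), ∀ᶠ t in 𝓝[>] 0,
      (∫ x in (xm t)..(xp t), (t - h x)) / (t * √t) ∈
        Icc (4 / 3 * √(2 / (κ - lam + ε))) (4 / 3 * √(2 / (κ - lam - ε))) := fun ε hε =>
    hμ ▸ eventually_integral_sub_div_mem_Icc (hf.sub hg) (by simp [h_def, hf0, hg0])
      (by simp [hd, hf1, hg1]) hε.1 (hμ ▸ hε.2)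
      (hx.mono fun t ht => ⟨ht.1, ht.2.1, by simp [h_def, ht.2.2.1], by simp [h_def, ht.2.2.2]⟩)
      hxm hxp
  have hlim : ∀ s : ℝ, Tendsto (fun ε => 4 / 3 * √(2 / (κ - lam + s * ε))) (𝓝[>] 0)
      (𝓝 (4 / 3 * √(2 / (κ - lam)))) := fun s => by
    have hc : ContinuousAt (fun ε : ℝ => 4 / 3 * √(2 / (κ - lam + s * ε))) 0 := by
      fun_prop (disch := simpa using (sub_pos.mpr hlamκ).ne')
    simpa using hc.tendsto.mono_left nhdsWithin_le_nhds
  refine (tendsto_of_forall_eventually_mem_Icc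
    (F := fun t => (∫ x in (xm t)..(xp t), (t - h x)) / (t * √t)) (hlim 1) (hlim (-1))
    (eventually_of_mem (Ioo_mem_nhdsGT (sub_pos.mpr hlamκ)) fun ε hε => ?_)).congr' ?_
  · simpa [sub_eq_add_neg] using hbounds ε hε
  · filter_upwards [self_mem_nhdsWithin] with t (ht : 0 < t)
    rw [rpow_neg_three_halves ht, div_eq_mul_inv]
    congr 2; ext x; simp only [h_def, Pi.sub_apply]; ring

theorem stmt5 (f g : ℝ → ℝ) (κ lam : ℝ)
    (hf : ContDiff ℝ 2 f) (hf0 : f 0 = 0) (hf1 : deriv f 0 = 0) (hf2 : deriv (deriv f) 0 = κ)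
    (hκ : 0 < κ)
    (hg : ContDiff ℝ 2 g) (hg0 : g 0 = 0) (hg1 : deriv g 0 = 0) (hg2 : deriv (deriv g) 0 = lam)
    (hlam : 0 ≤ lam) (hlamκ : lam < κ)
    (xm xp : ℝ → ℝ)
    (hx : ∀ᶠ t in nhdsWithin 0 (Set.Ioi 0), xm t < 0 ∧ 0 < xp t ∧
      f (xm t) = g (xm t) + t ∧ f (xp t) = g (xp t) + t)
    (hxm : Tendsto xm (nhdsWithin 0 (Set.Ioi 0)) (nhds 0))
    (hxp : Tendsto xp (nhdsWithin 0 (Set.Ioi 0)) (nhds 0)) :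
    Tendsto (fun t => (∫ x in (xm t)..(xp t), (g x + t - f x)) * t ^ (-(3/2) : ℝ))
      (nhdsWithin 0 (Set.Ioi 0)) (nhds ((4/3) * Real.sqrt (2/(κ - lam)))) :=
  stmt5_general f g κ lam hf hf0 hf1 hf2 hg hg0 hg1 hg2 hlamκ xm xp hx hxm hxp
end

section
/- Let f : ℝ → ℝ be C² with f(0) = 0, f'(0) = 0, f''(0) = κ > 0, and g : ℝ → ℝ be C² with g(0) = 0, g'(0) = 0, g''(0) = λ, where 0 ≤ λ < κ. For small t > 0 let x₋(t) < 0 < x₊(t) be the solutions near 0 of f(x) = g(x) + t. Then lim_{t→0⁺} (x₊(t) − x₋(t)) · t^{−1/2} = 2√(2/(κ − λ)). -/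
/-! By L'Hôpital, `h := f - g` satisfies `h x / x² → (κ - λ)/2` as `x → 0`.
Since `h (x± t) = t`, this gives `x±(t)² / t → 2/(κ - λ)`, that is
`|x±(t)| · t^(-1/2) → √(2/(κ - λ))`, and the two half-widths add up. -/

open Filter Real Topology

theorem tendsto_div_sq_of_hasDerivAt {h h' : ℝ → ℝ} {c : ℝ}
    (hh : ∀ x, HasDerivAt h (h' x) x) (h0 : h 0 = 0) (h'0 : h' 0 = 0) (hc : HasDerivAt h' c 0) :
    Tendsto (fun x => h x / x ^ 2) (𝓝[≠] 0) (𝓝 (c / 2)) := by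
  have hslope : Tendsto (fun x => h' x / x / 2) (𝓝[≠] 0) (𝓝 (c / 2)) := by
    refine (hasDerivAt_iff_tendsto_slope.mp hc).div_const 2 |>.congr fun x => ?_
    simp [slope_def_field, h'0]
  refine HasDerivAt.lhopital_zero_nhdsNE (f' := h') (g' := fun x => 2 * x)
    (.of_forall hh) (.of_forall fun x => by simpa using hasDerivAt_pow 2 x) ?_ ?_ ?_ ?_
  · filter_upwards [self_mem_nhdsWithin] with x hx
    simpa using hx
  · simpa [h0] using (hh 0).continuousAt.tendsto.mono_left nhdsWithin_le_nhds
  · simpa using ((continuous_pow 2).tendsto (0 : ℝ)).mono_left nhdsWithin_le_nhds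
  · refine hslope.congr fun x => ?_
    rw [div_div, mul_comm]

theorem tendsto_abs_mul_rpow_neg_half_of_root {h : ℝ → ℝ} {c : ℝ} (hc : 0 < c)
    (hlim : Tendsto (fun x => h x / x ^ 2) (𝓝[≠] 0) (𝓝 (c / 2))) {y : ℝ → ℝ}
    (hy : Tendsto y (𝓝[>] 0) (𝓝[≠] 0)) (hroot : ∀ᶠ t in 𝓝[>] 0, h (y t) = t) :
    Tendsto (fun t => |y t| * t ^ (-(1/2) : ℝ)) (𝓝[>] 0) (𝓝 √(2 / c)) := by
  have hratio : Tendsto (fun t => t / y t ^ 2) (𝓝[>] 0) (𝓝 (c / 2)) := by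
    refine (hlim.comp hy).congr' ?_
    filter_upwards [hroot] with t ht
    simp [ht]
  have hsq : Tendsto (fun t => y t ^ 2 / t) (𝓝[>] 0) (𝓝 (2 / c)) := by
    simpa only [inv_div] using hratio.inv₀ (by positivity)
  refine (continuous_sqrt.tendsto _).comp hsq |>.congr' ?_
  filter_upwards [self_mem_nhdsWithin] with t (ht : 0 < t)
  rw [Function.comp_apply, sqrt_div (sq_nonneg _), sqrt_sq_eq_abs, rpow_neg ht.le,
    ← sqrt_eq_rpow, div_eq_mul_inv]

theorem stmt6_general (f g : ℝ → ℝ) (κ lam : ℝ)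
    (hf : ContDiff ℝ 2 f) (hf0 : f 0 = 0) (hf1 : deriv f 0 = 0) (hf2 : deriv (deriv f) 0 = κ)
    (hg : ContDiff ℝ 2 g) (hg0 : g 0 = 0) (hg1 : deriv g 0 = 0) (hg2 : deriv (deriv g) 0 = lam)
    (hlamκ : lam < κ)
    (xm xp : ℝ → ℝ)
    (hx : ∀ᶠ t in nhdsWithin 0 (Set.Ioi 0), xm t < 0 ∧ 0 < xp t ∧
      f (xm t) = g (xm t) + t ∧ f (xp t) = g (xp t) + t)
    (hxm : Tendsto xm (nhdsWithin 0 (Set.Ioi 0)) (nhds 0))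
    (hxp : Tendsto xp (nhdsWithin 0 (Set.Ioi 0)) (nhds 0)) :
    Tendsto (fun t => (xp t - xm t) * t ^ (-(1/2) : ℝ))
      (nhdsWithin 0 (Set.Ioi 0)) (nhds (2 * Real.sqrt (2/(κ - lam)))) := by
  have hlim : Tendsto (fun x => (f x - g x) / x ^ 2) (𝓝[≠] 0) (𝓝 ((κ - lam) / 2)) :=
    tendsto_div_sq_of_hasDerivAt
      (fun x => (hf.differentiable two_ne_zero x).hasDerivAt.sub
        (hg.differentiable two_ne_zero x).hasDerivAt)
      (by simp [hf0, hg0]) (by simp [hf1, hg1])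
      (hf2 ▸ hg2 ▸ (hf.differentiable_deriv_two 0).hasDerivAt.sub
        (hg.differentiable_deriv_two 0).hasDerivAt)
  have hμ : 0 < κ - lam := sub_pos.mpr hlamκ
  have hp := tendsto_abs_mul_rpow_neg_half_of_root hμ hlim
    (tendsto_nhdsWithin_iff.mpr ⟨hxp, hx.mono fun t ht => ht.2.1.ne'⟩)
    (hx.mono fun t ht => by rw [ht.2.2.2]; ring)
  have hm := tendsto_abs_mul_rpow_neg_half_of_root hμ hlim
    (tendsto_nhdsWithin_iff.mpr ⟨hxm, hx.mono fun t ht => ht.1.ne⟩)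
    (hx.mono fun t ht => by rw [ht.2.2.1]; ring)
  rw [two_mul]
  refine (hp.add hm).congr' ?_
  filter_upwards [hx] with t ht
  rw [abs_of_pos ht.2.1, abs_of_neg ht.1]
  ring

theorem stmt6 (f g : ℝ → ℝ) (κ lam : ℝ)
    (hf : ContDiff ℝ 2 f) (hf0 : f 0 = 0) (hf1 : deriv f 0 = 0) (hf2 : deriv (deriv f) 0 = κ)
    (hκ : 0 < κ)
    (hg : ContDiff ℝ 2 g) (hg0 : g 0 = 0) (hg1 : deriv g 0 = 0) (hg2 : deriv (deriv g) 0 = lam)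
    (hlam : 0 ≤ lam) (hlamκ : lam < κ)
    (xm xp : ℝ → ℝ)
    (hx : ∀ᶠ t in nhdsWithin 0 (Set.Ioi 0), xm t < 0 ∧ 0 < xp t ∧
      f (xm t) = g (xm t) + t ∧ f (xp t) = g (xp t) + t)
    (hxm : Tendsto xm (nhdsWithin 0 (Set.Ioi 0)) (nhds 0))
    (hxp : Tendsto xp (nhdsWithin 0 (Set.Ioi 0)) (nhds 0)) :
    Tendsto (fun t => (xp t - xm t) * t ^ (-(1/2) : ℝ))
      (nhdsWithin 0 (Set.Ioi 0)) (nhds (2 * Real.sqrt (2/(κ - lam)))) :=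
  stmt6_general f g κ lam hf hf0 hf1 hf2 hg hg0 hg1 hg2 hlamκ xm xp hx hxm hxp
end

section
/- Let h : (0,∞) → ℝ and suppose there are constants γ₁ > 0, A > 0, t₁ > 0 such that h(t) ≥ γ₁ t^{3/2} and h(t) ≤ A for all t ∈ (0, t₁]. Set h_n = (c · ln n / n)^{2/3} with c > 5A/(3γ₁). Then lim_{n→∞} n^{5/3} ∫_{h_n}^{t₁} (1 − h(t)/A)^{n−2} dt = 0. -/
/-!
On `(h_n, t₁]` we have `h t ≥ γ₁ h_n^{3/2} = γ₁ c ln n / n`, so the integrand is at most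
`(1 - γ₁ c ln n / (A n))^{n-2} ≤ exp (-(n-2) γ₁ c ln n / (A n)) ≈ n^{-γ₁ c / A}`.
Hence `n^{5/3}` times the integral is `O(n^{5/3 - γ₁ c / A})`, which tends to `0`
because `γ₁ c / A > 5/3`.
-/

open MeasureTheory Filter Real

theorem norm_integral_one_sub_div_pow_le {h : ℝ → ℝ} {A δ a b : ℝ} (hA : 0 < A) (hab : a ≤ b)
    (hlow : ∀ t ∈ Set.Ioc a b, δ ≤ h t) (hup : ∀ t ∈ Set.Ioc a b, h t ≤ A) (m : ℕ) :
    ‖∫ t in a..b, (1 - h t / A) ^ m‖ ≤ exp (-(m * (δ / A))) * (b - a) := by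
  have hpointwise : ∀ t ∈ Set.uIoc a b, ‖(1 - h t / A) ^ m‖ ≤ exp (-(m * (δ / A))) := by
    intro t ht
    rw [Set.uIoc_of_le hab] at ht
    have hbase_nonneg : 0 ≤ 1 - h t / A := by
      rw [sub_nonneg, div_le_one hA]
      exact hup t ht
    have hbase_le : 1 - h t / A ≤ exp (-(δ / A)) :=
      calc 1 - h t / A ≤ 1 - δ / A := by gcongr; exact hlow t ht
        _ ≤ exp (-(δ / A)) := one_sub_le_exp_neg _
    calc ‖(1 - h t / A) ^ m‖ = (1 - h t / A) ^ m := by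
          rw [norm_pow, Real.norm_of_nonneg hbase_nonneg]
      _ ≤ exp (-(δ / A)) ^ m := by gcongr
      _ = exp (-(m * (δ / A))) := by rw [← exp_nat_mul, mul_neg]
  simpa [abs_of_nonneg (sub_nonneg.2 hab)] using
    intervalIntegral.norm_integral_le_of_norm_le_const hpointwise

theorem tendsto_rpow_mul_exp_neg_mul_log_div_atTop {p K : ℝ} (hpK : p < K) :
    Tendsto (fun n : ℕ => (n : ℝ) ^ p * exp (-(((n - 2 : ℕ) : ℝ) * (K * log n / n))))
      atTop (nhds 0) := by
  have hlog : Tendsto (fun n : ℕ => log n) atTop atTop :=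
    tendsto_log_atTop.comp tendsto_natCast_atTop_atTop
  have hrate : Tendsto (fun n : ℕ => p - (1 - 2 / (n : ℝ)) * K) atTop (nhds (p - K)) := by
    simpa using (tendsto_const_nhds (x := p)).sub
      (((tendsto_const_nhds (x := (1 : ℝ))).sub
        (tendsto_const_div_atTop_nhds_zero_nat 2)).mul_const K)
  refine (tendsto_exp_atBot.comp (hlog.atTop_mul_neg (sub_neg.2 hpK) hrate)).congr' ?_
  filter_upwards [eventually_ge_atTop 2] with n hn
  have hn_pos : (0 : ℝ) < n := by positivity
  rw [Function.comp_apply, rpow_def_of_pos hn_pos, ← exp_add, Nat.cast_sub hn]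
  congr 1
  field_simp
  push_cast
  ring

theorem tendsto_log_div_rpow_atTop (c : ℝ) {r : ℝ} (hr : 0 < r) :
    Tendsto (fun n : ℕ => (c * log n / n) ^ r) atTop (nhds 0) := by
  have hlog_div : Tendsto (fun n : ℕ => c * log n / n) atTop (nhds 0) := by
    simpa [mul_div_assoc] using
      ((isLittleO_log_id_atTop.tendsto_div_nhds_zero).comp tendsto_natCast_atTop_atTop).const_mul c
  simpa [Function.comp_def, zero_rpow hr.ne'] using
    ((continuousAt_rpow_const 0 r (Or.inr hr.le)).tendsto).comp hlog_div

theorem mul_le_of_mem_Ioc_rpow_two_thirds {h : ℝ → ℝ} {γ t₁ b : ℝ} (hγ : 0 ≤ γ) (hb : 0 ≤ b)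
    (hlow : ∀ t ∈ Set.Ioc 0 t₁, γ * t ^ (3 / 2 : ℝ) ≤ h t) :
    ∀ t ∈ Set.Ioc (b ^ (2 / 3 : ℝ)) t₁, γ * b ≤ h t := by
  intro t ht
  have hb_le : b ≤ t ^ (3 / 2 : ℝ) :=
    calc b = (b ^ (2 / 3 : ℝ)) ^ (3 / 2 : ℝ) := by rw [← rpow_mul hb]; norm_num
      _ ≤ t ^ (3 / 2 : ℝ) := by gcongr; exact ht.1.le
  exact (mul_le_mul_of_nonneg_left hb_le hγ).trans
    (hlow t ⟨(rpow_nonneg hb _).trans_lt ht.1, ht.2⟩)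

theorem stmt8 (h : ℝ → ℝ) (γ₁ A t₁ c : ℝ) (hγ : 0 < γ₁) (hA : 0 < A) (ht₁ : 0 < t₁)
    (hlow : ∀ t ∈ Set.Ioc (0:ℝ) t₁, γ₁ * t ^ (3/2 : ℝ) ≤ h t)
    (hup : ∀ t ∈ Set.Ioc (0:ℝ) t₁, h t ≤ A)
    (hc : 5*A/(3*γ₁) < c) :
    Tendsto (fun n : ℕ => (n:ℝ)^(5/3 : ℝ) *
      ∫ t in ((c * Real.log n / n) ^ (2/3 : ℝ))..t₁, (1 - h t / A)^(n-2))
      atTop (nhds 0) := by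
  have hc0 : 0 < c := lt_trans (by positivity) hc
  have hK : 5 / 3 < γ₁ * c / A := by
    rw [div_lt_iff₀ (by positivity)] at hc
    rw [lt_div_iff₀ hA]
    linarith
  refine squeeze_zero_norm' ?_ (by
    simpa using (tendsto_rpow_mul_exp_neg_mul_log_div_atTop hK).const_mul t₁)
  filter_upwards [(tendsto_log_div_rpow_atTop c (r := 2 / 3) (by norm_num)).eventually_lt_const ht₁]
    with n hn_cut
  set b : ℝ := c * log n / n
  have hb : 0 ≤ b := div_nonneg (mul_nonneg hc0.le (log_natCast_nonneg n)) n.cast_nonneg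
  have hup_tail : ∀ t ∈ Set.Ioc (b ^ (2 / 3 : ℝ)) t₁, h t ≤ A :=
    fun t ht => hup t ⟨(rpow_nonneg hb _).trans_lt ht.1, ht.2⟩
  have hn_rpow : 0 ≤ (n : ℝ) ^ (5 / 3 : ℝ) := rpow_nonneg n.cast_nonneg _
  calc ‖(n : ℝ) ^ (5 / 3 : ℝ) * ∫ t in (b ^ (2 / 3 : ℝ))..t₁, (1 - h t / A) ^ (n - 2)‖
      = (n : ℝ) ^ (5 / 3 : ℝ) * ‖∫ t in (b ^ (2 / 3 : ℝ))..t₁, (1 - h t / A) ^ (n - 2)‖ := by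
        rw [norm_mul, Real.norm_of_nonneg hn_rpow]
    _ ≤ (n : ℝ) ^ (5 / 3 : ℝ) *
          (exp (-(((n - 2 : ℕ) : ℝ) * (γ₁ * b / A))) * (t₁ - b ^ (2 / 3 : ℝ))) := by
        gcongr
        exact norm_integral_one_sub_div_pow_le hA hn_cut.le
          (mul_le_of_mem_Ioc_rpow_two_thirds hγ.le hb hlow) hup_tail _
    _ ≤ t₁ * ((n : ℝ) ^ (5 / 3 : ℝ) *
          exp (-(((n - 2 : ℕ) : ℝ) * (γ₁ * c / A * log n / n)))) := by
        have hrate : γ₁ * b / A = γ₁ * c / A * log n / n := by simp only [b]; ring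
        rw [hrate, mul_left_comm t₁, mul_comm t₁]
        gcongr
        linarith [rpow_nonneg hb (2 / 3)]
end

section
/- Let w, κ : S¹ → (0, ∞) be continuous, let A > 0, and suppose A(u, t) is a function continuous in (u, t) with A(u,t)/t → w(u) uniformly in u as t → 0⁺, 0 < A(u,t) ≤ A, and A(u,t) ≥ ĉ t for some ĉ > 0 and all small t. Then lim_{n→∞} (n choose 2) ∫₀^{h_n} (1 − A(u,t)/A)^{n−2} · t dt = 1/(2 w(u)²) for each u ∈ S¹, where h_n = c ln n / n with c > 0 sufficiently large. -/
/-!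
Near `t = 0` the integrand is squeezed between the model integrands `(1 - b t)^(n-2) t`, for
slopes `b` slightly below and slightly above `w(u)/A₀`. Their integrals are explicit: with
`X = 1 - b h`,
`C(n,2) ∫₀^h (1 - b t)^(n-2) t dt = (1 + (n-1) X^n - n X^(n-1)) / (2 b²)`.
This is at most `1/(2b²)` whenever `0 ≤ X ≤ 1`, and for `h = c log n / n` with `b c ≥ 4` it
falls short of `1/(2b²)` by at most `n X^(n-1) / (2b²) ≤ 1/(2b²n)`. Letting `b → w(u)/A₀` gives
the limit. The bound `A(u,t) ≥ ĉ t` gives `w ≥ ĉ`, so `c₀ = 4A₀/ĉ` serves for every `u`.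
-/

open MeasureTheory Filter Real Set Topology

theorem choose_two_mul_integral_one_sub_mul_pow_mul {a : ℝ} (ha : a ≠ 0) (h : ℝ) {n : ℕ}
    (hn : 2 ≤ n) :
    (n.choose 2 : ℝ) * ∫ t in (0:ℝ)..h, (1 - a * t) ^ (n - 2) * t =
      (1 + ((n:ℝ) - 1) * (1 - a * h) ^ n - n * (1 - a * h) ^ (n - 1)) / (2 * a ^ 2) := by
  obtain ⟨m, rfl⟩ := Nat.exists_eq_add_of_le' hn
  have hderiv : ∀ t, HasDerivAt
      (fun t => (((m:ℝ) + 1) * (1 - a * t) ^ (m + 2) - ((m:ℝ) + 2) * (1 - a * t) ^ (m + 1)) /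
        (2 * a ^ 2))
      (((m + 2).choose 2 : ℝ) * ((1 - a * t) ^ m * t)) t := by
    intro t
    have hlin : HasDerivAt (fun t : ℝ => 1 - a * t) (-a) t := by
      simpa using ((hasDerivAt_id t).const_mul a).const_sub 1
    refine ((((hlin.pow (m + 2)).const_mul ((m:ℝ) + 1)).sub
      ((hlin.pow (m + 1)).const_mul ((m:ℝ) + 2))).div_const (2 * a ^ 2)).congr_deriv ?_
    rw [Nat.cast_choose_two]
    push_cast
    field_simp
    ring
  simp only [Nat.add_sub_cancel]
  rw [← intervalIntegral.integral_const_mul,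
    intervalIntegral.integral_eq_sub_of_hasDerivAt (fun t _ => hderiv t)
      (by apply Continuous.intervalIntegrable; fun_prop)]
  push_cast
  field_simp
  ring

theorem choose_two_mul_integral_one_sub_mul_pow_mul_le {a h : ℝ} (ha : 0 < a) (hh : 0 ≤ h)
    (hah : a * h ≤ 1) {n : ℕ} (hn : 2 ≤ n) :
    (n.choose 2 : ℝ) * ∫ t in (0:ℝ)..h, (1 - a * t) ^ (n - 2) * t ≤ 1 / (2 * a ^ 2) := by
  rw [choose_two_mul_integral_one_sub_mul_pow_mul ha.ne' h hn]
  gcongr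
  set X := 1 - a * h
  have hX0 : 0 ≤ X := by linarith
  have hX1 : X ≤ 1 := by nlinarith
  have hXn : X ^ n ≤ X ^ (n - 1) := pow_le_pow_of_le_one hX0 hX1 (Nat.sub_le n 1)
  have hn1 : (0:ℝ) ≤ (n:ℝ) - 1 := by
    have hn2 : (2:ℝ) ≤ n := by exact_mod_cast hn
    linarith
  nlinarith [pow_nonneg hX0 (n - 1)]

theorem tendsto_mul_log_div_natCast (c : ℝ) :
    Tendsto (fun n : ℕ => c * log n / n) atTop (𝓝 0) := by
  have hlog : Tendsto (fun n : ℕ => log n / n) atTop (𝓝 0) :=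
    isLittleO_log_id_atTop.tendsto_div_nhds_zero.comp tendsto_natCast_atTop_atTop
  simpa only [mul_zero, mul_div_assoc] using hlog.const_mul c

theorem mul_log_div_natCast_nonneg {c : ℝ} (hc : 0 ≤ c) (n : ℕ) : 0 ≤ c * log n / n :=
  div_nonneg (mul_nonneg hc (log_natCast_nonneg n)) n.cast_nonneg

theorem eventually_mul_mul_log_div_natCast_le_one (a c : ℝ) :
    ∀ᶠ n : ℕ in atTop, a * (c * log n / n) ≤ 1 := by
  have := (tendsto_mul_log_div_natCast c).const_mul a
  rw [mul_zero] at this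
  exact this.eventually (eventually_le_nhds one_pos)

theorem tendsto_natCast_mul_one_sub_mul_log_div_pow {a c : ℝ} (ha : 0 < a) (hac : 4 ≤ a * c) :
    Tendsto (fun n : ℕ => n * (1 - a * (c * log n / n)) ^ (n - 1)) atTop (𝓝 0) := by
  have hsmall := eventually_mul_mul_log_div_natCast_le_one a c
  refine squeeze_zero' ?_ ?_ (tendsto_inv_atTop_zero.comp tendsto_natCast_atTop_atTop)
  · filter_upwards [hsmall] with n hn
    exact mul_nonneg n.cast_nonneg (pow_nonneg (by linarith) _)
  filter_upwards [hsmall, eventually_ge_atTop 2] with n hsm hn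
  have hnR : (2:ℝ) ≤ n := by exact_mod_cast hn
  have hnpos : (0:ℝ) < n := by linarith
  have hexponent : 2 * log n ≤ ((n - 1 : ℕ) : ℝ) * (a * (c * log n / n)) := by
    rw [Nat.cast_sub (by omega), Nat.cast_one]
    have hfrac : (1:ℝ) / 2 ≤ ((n:ℝ) - 1) / n := by
      rw [div_le_div_iff₀ (by norm_num) hnpos]; linarith
    have hfactor :
        ((n:ℝ) - 1) * (a * (c * log n / n)) = (a * c) * (log n * (((n:ℝ) - 1) / n)) := by
      field_simp
    rw [hfactor]
    have hlog := log_natCast_nonneg n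
    nlinarith [mul_le_mul hac (mul_le_mul_of_nonneg_left hfrac hlog) (by positivity) (by linarith)]
  have hpow : (1 - a * (c * log n / n)) ^ (n - 1) ≤ ((n:ℝ) ^ 2)⁻¹ :=
    calc (1 - a * (c * log n / n)) ^ (n - 1) ≤ exp (-(a * (c * log n / n))) ^ (n - 1) :=
          pow_le_pow_left₀ (by linarith) (one_sub_le_exp_neg _) _
      _ = exp (-(((n - 1 : ℕ) : ℝ) * (a * (c * log n / n)))) := by
          rw [← exp_nat_mul]; ring_nf
      _ ≤ exp (-(2 * log n)) := exp_le_exp.2 (by linarith)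
      _ = ((n:ℝ) ^ 2)⁻¹ := by
          rw [exp_neg, show 2 * log n = log ((n:ℝ) ^ 2) by rw [log_pow]; norm_num,
            exp_log (by positivity)]
  calc (n:ℝ) * (1 - a * (c * log n / n)) ^ (n - 1) ≤ n * ((n:ℝ) ^ 2)⁻¹ :=
        mul_le_mul_of_nonneg_left hpow hnpos.le
    _ = (n:ℝ)⁻¹ := by field_simp

theorem tendsto_choose_two_mul_integral_one_sub_mul_pow_mul {a c : ℝ} (ha : 0 < a)
    (hac : 4 ≤ a * c) :
    Tendsto (fun n : ℕ => (n.choose 2 : ℝ) *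
      ∫ t in (0:ℝ)..c * log n / n, (1 - a * t) ^ (n - 2) * t) atTop (𝓝 (1 / (2 * a ^ 2))) := by
  have hlower : Tendsto
      (fun n : ℕ => (1 - n * (1 - a * (c * log n / n)) ^ (n - 1)) / (2 * a ^ 2)) atTop
      (𝓝 (1 / (2 * a ^ 2))) := by
    simpa only [sub_zero] using
      ((tendsto_natCast_mul_one_sub_mul_log_div_pow ha hac).const_sub 1).div_const (2 * a ^ 2)
  refine tendsto_of_tendsto_of_tendsto_of_le_of_le' hlower tendsto_const_nhds ?_ ?_
  · filter_upwards [eventually_ge_atTop 2, eventually_mul_mul_log_div_natCast_le_one a c]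
      with n hn hsmall
    rw [choose_two_mul_integral_one_sub_mul_pow_mul ha.ne' _ hn]
    have hnR : (1:ℝ) ≤ n := by exact_mod_cast (by omega : 1 ≤ n)
    gcongr
    have := pow_nonneg (sub_nonneg.2 hsmall) n
    nlinarith
  · have hc : 0 ≤ c := by nlinarith
    filter_upwards [eventually_ge_atTop 2, eventually_mul_mul_log_div_natCast_le_one a c]
      with n hn hsmall
    exact choose_two_mul_integral_one_sub_mul_pow_mul_le ha (mul_log_div_natCast_nonneg hc n)
      hsmall hn

theorem intervalIntegrable_one_sub_pow_mul_id {g : ℝ → ℝ} {h : ℝ} (hh : 0 ≤ h)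
    (hg : ContinuousOn g (Ioi 0)) (hg01 : ∀ t > 0, 0 ≤ g t ∧ g t ≤ 1) (m : ℕ) :
    IntervalIntegrable (fun t => (1 - g t) ^ m * t) volume 0 h := by
  rw [intervalIntegrable_iff_integrableOn_Ioc_of_le hh]
  have hcont : ContinuousOn (fun t => (1 - g t) ^ m * t) (Ioc 0 h) :=
    (((continuousOn_const.sub hg).pow m).mul continuousOn_id).mono Ioc_subset_Ioi_self
  refine Integrable.mono' continuous_id.integrableOn_Ioc
    (hcont.aestronglyMeasurable measurableSet_Ioc) ?_
  filter_upwards [ae_restrict_mem measurableSet_Ioc] with t ht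
  obtain ⟨hg0, hg1⟩ := hg01 t ht.1
  rw [norm_mul, norm_pow, Real.norm_eq_abs, Real.norm_eq_abs, abs_of_pos ht.1,
    abs_of_nonneg (by linarith)]
  exact mul_le_of_le_one_left ht.1.le (pow_le_one₀ (by linarith) (by linarith))

theorem integral_pow_mul_id_mono {f g : ℝ → ℝ} {h : ℝ} (hh : 0 ≤ h) {m : ℕ}
    (hf : IntervalIntegrable (fun t => f t ^ m * t) volume 0 h)
    (hg : IntervalIntegrable (fun t => g t ^ m * t) volume 0 h)
    (hfg : ∀ t ∈ Ioc 0 h, 0 ≤ f t ∧ f t ≤ g t) :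
    ∫ t in (0:ℝ)..h, f t ^ m * t ≤ ∫ t in (0:ℝ)..h, g t ^ m * t := by
  rw [intervalIntegral.integral_of_le hh, intervalIntegral.integral_of_le hh]
  refine setIntegral_mono_on hf.1 hg.1 measurableSet_Ioc fun t ht => ?_
  exact mul_le_mul_of_nonneg_right (pow_le_pow_left₀ (hfg t ht).1 (hfg t ht).2 m) ht.1.le

theorem eventually_forall_Ioc_of_tendsto_zero {p : ℝ → Prop} (hp : ∀ᶠ t in 𝓝[>] 0, p t)
    {h : ℕ → ℝ} (hh : Tendsto h atTop (𝓝 0)) : ∀ᶠ n in atTop, ∀ t ∈ Ioc 0 (h n), p t := by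
  obtain ⟨t₁, ht₁, hsub⟩ := mem_nhdsGT_iff_exists_Ioc_subset.1 hp
  filter_upwards [hh.eventually (eventually_le_nhds ht₁)] with n hn t ht
  exact hsub ⟨ht.1, ht.2.trans hn⟩

section comparison

variable {g : ℝ → ℝ} {w b c : ℝ} (hg : ContinuousOn g (Ioi 0))
  (hg01 : ∀ t > 0, 0 ≤ g t ∧ g t ≤ 1) (hlim : Tendsto (fun t => g t / t) (𝓝[>] 0) (𝓝 w))
include hg hg01 hlim

theorem eventually_lt_choose_two_mul_integral_one_sub_pow_mul {l : ℝ} (hwb : w < b) (hb : 0 < b)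
    (hbc : 4 ≤ b * c) (hl : l < 1 / (2 * b ^ 2)) :
    ∀ᶠ n : ℕ in atTop,
      l < (n.choose 2 : ℝ) * ∫ t in (0:ℝ)..c * log n / n, (1 - g t) ^ (n - 2) * t := by
  have hc : 0 ≤ c := by nlinarith
  have hgb : ∀ᶠ t in 𝓝[>] 0, g t ≤ b * t := by
    filter_upwards [hlim.eventually (gt_mem_nhds hwb), self_mem_nhdsWithin] with t ht ht0
    exact ((div_lt_iff₀ ht0).1 ht).le
  filter_upwards
    [(tendsto_choose_two_mul_integral_one_sub_mul_pow_mul hb hbc).eventually_const_lt hl,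
    eventually_forall_Ioc_of_tendsto_zero hgb (tendsto_mul_log_div_natCast c),
    eventually_mul_mul_log_div_natCast_le_one b c] with n hn hgbn hsmall
  have hh := mul_log_div_natCast_nonneg hc n
  calc l < (n.choose 2 : ℝ) * ∫ t in (0:ℝ)..c * log n / n, (1 - b * t) ^ (n - 2) * t := hn
    _ ≤ (n.choose 2 : ℝ) * ∫ t in (0:ℝ)..c * log n / n, (1 - g t) ^ (n - 2) * t := by
      refine mul_le_mul_of_nonneg_left (integral_pow_mul_id_mono hh
        (Continuous.intervalIntegrable (by fun_prop) _ _)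
        (intervalIntegrable_one_sub_pow_mul_id hh hg hg01 _)
        fun t ht => ⟨?_, by linarith [hgbn t ht]⟩) (Nat.cast_nonneg _)
      nlinarith [ht.2]

theorem eventually_choose_two_mul_integral_one_sub_pow_mul_le (hbw : b < w) (hb : 0 < b)
    (hc : 0 ≤ c) :
    ∀ᶠ n : ℕ in atTop,
      (n.choose 2 : ℝ) * ∫ t in (0:ℝ)..c * log n / n, (1 - g t) ^ (n - 2) * t ≤
        1 / (2 * b ^ 2) := by
  have hbg : ∀ᶠ t in 𝓝[>] 0, b * t ≤ g t := by
    filter_upwards [hlim.eventually (lt_mem_nhds hbw), self_mem_nhdsWithin] with t ht ht0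
    exact ((lt_div_iff₀ ht0).1 ht).le
  filter_upwards [eventually_ge_atTop 2,
    eventually_forall_Ioc_of_tendsto_zero hbg (tendsto_mul_log_div_natCast c),
    eventually_mul_mul_log_div_natCast_le_one b c] with n hn hbgn hsmall
  have hh := mul_log_div_natCast_nonneg hc n
  calc (n.choose 2 : ℝ) * ∫ t in (0:ℝ)..c * log n / n, (1 - g t) ^ (n - 2) * t
      ≤ (n.choose 2 : ℝ) * ∫ t in (0:ℝ)..c * log n / n, (1 - b * t) ^ (n - 2) * t :=
        mul_le_mul_of_nonneg_left (integral_pow_mul_id_mono hh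
          (intervalIntegrable_one_sub_pow_mul_id hh hg hg01 _)
          (Continuous.intervalIntegrable (by fun_prop) _ _)
          fun t ht => ⟨sub_nonneg.2 (hg01 t ht.1).2, by linarith [hbgn t ht]⟩) (Nat.cast_nonneg _)
    _ ≤ 1 / (2 * b ^ 2) := choose_two_mul_integral_one_sub_mul_pow_mul_le hb hh hsmall hn

theorem tendsto_choose_two_mul_integral_one_sub_pow_mul (hw : 0 < w) (hwc : 4 ≤ w * c) :
    Tendsto (fun n : ℕ => (n.choose 2 : ℝ) *
      ∫ t in (0:ℝ)..c * log n / n, (1 - g t) ^ (n - 2) * t) atTop (𝓝 (1 / (2 * w ^ 2))) := by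
  have hc : 0 < c := by nlinarith
  have hcont : ContinuousAt (fun x : ℝ => 1 / (2 * x ^ 2)) w :=
    continuousAt_const.div (by fun_prop) (by positivity)
  rw [tendsto_order]
  refine ⟨fun l hl => ?_, fun l hl => ?_⟩
  · obtain ⟨b, hlb, hwb : w < b⟩ :=
      ((hcont.eventually (lt_mem_nhds hl)).filter_mono nhdsWithin_le_nhds |>.and
        (eventually_mem_nhdsWithin (s := Ioi w))).exists
    exact eventually_lt_choose_two_mul_integral_one_sub_pow_mul hg hg01 hlim hwb (hw.trans hwb)
      (hwc.trans (mul_le_mul_of_nonneg_right hwb.le hc.le)) hlb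
  · obtain ⟨b, hlb, hbw : b < w, hb : 0 < b⟩ :=
      ((hcont.eventually (gt_mem_nhds hl)).filter_mono nhdsWithin_le_nhds |>.and
        ((eventually_mem_nhdsWithin (s := Iio w)).and
          (nhdsWithin_le_nhds (Ioi_mem_nhds hw)))).exists
    filter_upwards [eventually_choose_two_mul_integral_one_sub_pow_mul_le hg hg01 hlim hbw hb
      hc.le] with n hn using hn.trans_lt hlb

end comparison

theorem stmt14_general (w : EuclideanSpace ℝ (Fin 2) → ℝ) (A₀ : ℝ) (hA₀ : 0 < A₀)
    (A : EuclideanSpace ℝ (Fin 2) → ℝ → ℝ)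
    (S : Set (EuclideanSpace ℝ (Fin 2)))
    (hAcont : ContinuousOn (fun p : EuclideanSpace ℝ (Fin 2) × ℝ => A p.1 p.2)
      (S ×ˢ Set.Ioi (0:ℝ)))
    (hAunif : TendstoUniformlyOn (fun t u => A u t / t) w (nhdsWithin 0 (Set.Ioi 0)) S)
    (hAbd : ∀ u ∈ S, ∀ t : ℝ, 0 < t → 0 < A u t ∧ A u t ≤ A₀)
    (hAlin : ∃ chat > (0:ℝ), ∃ t₀ > (0:ℝ), ∀ u ∈ S, ∀ t ∈ Set.Ioc (0:ℝ) t₀, chat * t ≤ A u t) :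
    ∃ c₀ > (0:ℝ), ∀ c ≥ c₀, ∀ u ∈ S,
      Tendsto (fun n : ℕ => ((n.choose 2 : ℝ) / A₀^2) *
          ∫ t in (0:ℝ)..(c * Real.log n / n), (1 - A u t / A₀)^(n-2) * t)
        atTop (nhds (1 / (2 * (w u)^2))) := by
  obtain ⟨chat, hchat, t₀, ht₀, hlin⟩ := hAlin
  refine ⟨4 * A₀ / chat, by positivity, fun c hc u hu => ?_⟩
  have hwu : Tendsto (fun t => A u t / t) (𝓝[>] 0) (𝓝 (w u)) := hAunif.tendsto_at hu
  have hchat_le : chat ≤ w u := ge_of_tendsto hwu <| by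
    filter_upwards [Ioc_mem_nhdsGT ht₀] with t ht
    exact (le_div_iff₀ ht.1).2 (hlin u hu t ht)
  have hwA : 0 < w u / A₀ := div_pos (hchat.trans_le hchat_le) hA₀
  have hlim : Tendsto (fun t => A u t / A₀ / t) (𝓝[>] 0) (𝓝 (w u / A₀)) := by
    simpa only [div_right_comm] using hwu.div_const A₀
  have hcont : ContinuousOn (A u) (Ioi 0) :=
    hAcont.comp (f := fun t => (u, t)) (by fun_prop) fun _ ht => ⟨hu, ht⟩
  have hwc : 4 ≤ w u / A₀ * c :=
    calc 4 = chat / A₀ * (4 * A₀ / chat) := by field_simp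
      _ ≤ w u / A₀ * c := mul_le_mul (by gcongr) hc (by positivity) hwA.le
  have key := tendsto_choose_two_mul_integral_one_sub_pow_mul (g := fun t => A u t / A₀)
    (hcont.div_const A₀) (fun t ht => ⟨div_nonneg (hAbd u hu t ht).1.le hA₀.le,
      (div_le_one hA₀).2 (hAbd u hu t ht).2⟩) hlim hwA hwc
  convert key.const_mul (A₀ ^ 2)⁻¹ using 1
  · ext n
    ring
  · field_simp

theorem stmt14 (w κ : EuclideanSpace ℝ (Fin 2) → ℝ) (A₀ : ℝ) (hA₀ : 0 < A₀)
    (A : EuclideanSpace ℝ (Fin 2) → ℝ → ℝ)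
    (S : Set (EuclideanSpace ℝ (Fin 2)))
    (hS : S = Metric.sphere (0 : EuclideanSpace ℝ (Fin 2)) 1)
    (hw : ContinuousOn w S) (hwpos : ∀ u ∈ S, 0 < w u)
    (hκ : ContinuousOn κ S) (hκpos : ∀ u ∈ S, 0 < κ u)
    (hAcont : ContinuousOn (fun p : EuclideanSpace ℝ (Fin 2) × ℝ => A p.1 p.2)
      (S ×ˢ Set.Ioi (0:ℝ)))
    (hAunif : TendstoUniformlyOn (fun t u => A u t / t) w (nhdsWithin 0 (Set.Ioi 0)) S)
    (hAbd : ∀ u ∈ S, ∀ t : ℝ, 0 < t → 0 < A u t ∧ A u t ≤ A₀)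
    (hAlin : ∃ chat > (0:ℝ), ∃ t₀ > (0:ℝ), ∀ u ∈ S, ∀ t ∈ Set.Ioc (0:ℝ) t₀, chat * t ≤ A u t) :
    ∃ c₀ > (0:ℝ), ∀ c ≥ c₀, ∀ u ∈ S,
      Tendsto (fun n : ℕ => ((n.choose 2 : ℝ) / A₀^2) *
          ∫ t in (0:ℝ)..(c * Real.log n / n), (1 - A u t / A₀)^(n-2) * t)
        atTop (nhds (1 / (2 * (w u)^2))) :=
  stmt14_general w A₀ hA₀ A S hAcont hAunif hAbd hAlin
end
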